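/- For every signed subcubic graph Σ (every vertex of the underlying graph has degree at most 3), the frustration number equals the frustration index: l₀(Σ) = l(Σ). -/

import Mathlib

open SimpleGraph
open scoped Classical

variable {V : Type*}

/-- The sign of a walk: the product of the signs of its edges. -/
def walkSign (σ : Sym2 V → ℤˣ) {G : SimpleGraph V} {u v : V} (w : G.Walk u v) : ℤˣ :=
  (w.edges.map σ).prod

/-- A signed graph is balanced if every cycle (circle) has positive sign. -/
def IsBalanced (G : SimpleGraph V) (σ : Sym2 V → ℤˣ) : Prop :=
  ∀ (v : V) (w : G.Walk v v), w.IsCycle → walkSign σ w = 1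

/-- The sign function induced on an induced subgraph. -/
def induceSign (σ : Sym2 V → ℤˣ) (X : Set V) : Sym2 ↥X → ℤˣ :=
  fun e => σ (e.map Subtype.val)

/-- Frustration index: minimum number of edges to delete to obtain balance. -/
noncomputable def frustrationIndex (G : SimpleGraph V) (σ : Sym2 V → ℤˣ) : ℕ :=
  sInf {n | ∃ s : Finset (Sym2 V), s.card = n ∧ IsBalanced (G.deleteEdges ↑s) σ}

/-- Frustration number: minimum number of vertices to delete to obtain balance. -/
noncomputable def frustrationNumber (G : SimpleGraph V) (σ : Sym2 V → ℤˣ) : ℕ :=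
  sInf {n | ∃ X : Finset V, X.card = n ∧
    IsBalanced (G.induce ((↑X : Set V)ᶜ)) (induceSign σ ((↑X : Set V)ᶜ))}

/-- The sign function obtained by switching at a vertex `v`:
negate the sign of every (non-loop) edge incident to `v`. -/
noncomputable def switchSign (σ : Sym2 V → ℤˣ) (v : V) : Sym2 V → ℤˣ :=
  fun e => if v ∈ e then -σ e else σ e

/-- `τ` is obtained from `σ` by switching at `v` (as signatures of `G`). -/
def SwitchedAt (G : SimpleGraph V) (σ τ : Sym2 V → ℤˣ) (v : V) : Prop :=
  ∀ e ∈ G.edgeSet, τ e = switchSign σ v e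

/-- Switching equivalence: related by a finite sequence of switchings. -/
def SwitchEquiv (G : SimpleGraph V) : (Sym2 V → ℤˣ) → (Sym2 V → ℤˣ) → Prop :=
  Relation.ReflTransGen (fun σ τ => ∃ v, SwitchedAt G σ τ v)

@[simp] lemma zu_cancel (a b : ℤˣ) : a * (a * b) = b := by
  rw [← mul_assoc, Int.units_mul_self, one_mul]

@[simp] lemma walkSign_nil {σ : Sym2 V → ℤˣ} {G : SimpleGraph V} {u : V} :
    walkSign σ (Walk.nil : G.Walk u u) = 1 := rfl

lemma walkSign_cons {σ : Sym2 V → ℤˣ} {G : SimpleGraph V} {u v w : V}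
    (h : G.Adj u v) (p : G.Walk v w) :
    walkSign σ (Walk.cons h p) = σ s(u, v) * walkSign σ p := by
  simp [walkSign]

lemma walkSign_append {σ : Sym2 V → ℤˣ} {G : SimpleGraph V} {u v w : V}
    (p : G.Walk u v) (q : G.Walk v w) :
    walkSign σ (p.append q) = walkSign σ p * walkSign σ q := by
  simp [walkSign, Walk.edges_append]

lemma walkSign_reverse {σ : Sym2 V → ℤˣ} {G : SimpleGraph V} {u v : V} (p : G.Walk u v) :
    walkSign σ p.reverse = walkSign σ p := by
  simp [walkSign, Walk.edges_reverse]

lemma walkSign_copy {σ : Sym2 V → ℤˣ} {G : SimpleGraph V} {u v u' v' : V}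
    (p : G.Walk u v) (hu : u = u') (hv : v = v') :
    walkSign σ (p.copy hu hv) = walkSign σ p := by
  simp [walkSign]

lemma walkSign_rotate {σ : Sym2 V → ℤˣ} {G : SimpleGraph V} {u v : V}
    (c : G.Walk v v) (h : u ∈ c.support) :
    walkSign σ (c.rotate u h) = walkSign σ c := by
  exact List.Perm.prod_eq (((Walk.rotate_edges c u h).perm).map σ)

lemma walkSign_concat {σ : Sym2 V → ℤˣ} {G : SimpleGraph V} {u v w : V}
    (p : G.Walk u v) (h : G.Adj v w) :
    walkSign σ (p.concat h) = walkSign σ p * σ s(v, w) := by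
  simp [walkSign, Walk.edges_concat]

lemma path_edge_length {G : SimpleGraph V} :
    ∀ {u v : V} (p : G.Walk u v), p.IsPath → s(u, v) ∈ p.edges → p.length = 1 := by
  intro u v p
  induction p with
  | nil => intro _ h; simp at h
  | cons h q ih =>
    rename_i a b c
    intro hp he
    rw [Walk.edges_cons, List.mem_cons] at he
    rcases he with he | he
    · rcases Sym2.eq_iff.mp he with ⟨-, rfl⟩ | ⟨rfl, rfl⟩
      · have : q.IsPath := (Walk.cons_isPath_iff h q).mp hp |>.1
        have hnil : q = Walk.nil := Walk.isPath_iff_eq_nil.mp this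
        simp [hnil]
      · exact absurd h (G.irrefl)
    · have hu : a ∈ q.support := Walk.fst_mem_support_of_mem_edges q he
      rw [Walk.cons_isPath_iff] at hp
      exact absurd hu hp.2

lemma closedWalkSign {G : SimpleGraph V} {σ : Sym2 V → ℤˣ} (hb : IsBalanced G σ) :
    ∀ (n : ℕ) (v : V) (w : G.Walk v v), w.length ≤ n → walkSign σ w = 1 := by
  intro n
  induction n with
  | zero =>
    intro v w hw
    have h0 : w.length = 0 := Nat.le_zero.mp hw
    have : w.Nil := Walk.nil_iff_length_eq.mpr h0
    cases w with
    | nil => simp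
    | cons h p => simp at this
  | succ n ih =>
    intro v w hw
    by_cases hnd : w.support.tail.Nodup
    · cases w with
      | nil => simp
      | cons hadj p =>
        rename_i u
        cases p with
        | nil => exact absurd hadj (G.irrefl)
        | cons hadj2 q =>
          rename_i x
          cases q with
          | nil =>
            -- length-2 closed walk v-u-v
            rw [walkSign_cons, walkSign_cons, walkSign_nil, mul_one]
            rw [show s(v,u) = s(u,v) from Sym2.eq_swap]
            exact Int.units_mul_self _
          | cons hadj3 r =>
            -- length ≥ 3, with nodup tail support: a genuine cycle
            set p : G.Walk u v := Walk.cons hadj2 (Walk.cons hadj3 r) with hp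
            have hpath : p.IsPath := by
              rw [Walk.isPath_def]
              simpa using hnd
            have hnotmem : s(v, u) ∉ p.edges := by
              intro hmem
              have : p.length = 1 := by
                apply path_edge_length p hpath
                rwa [show s(u,v) = s(v,u) from Sym2.eq_swap]
              simp [hp] at this
            have hcyc : (Walk.cons hadj p).IsCycle :=
              (Walk.cons_isCycle_iff p hadj).mpr ⟨hpath, hnotmem⟩
            exact hb v _ hcyc
    · -- some vertex x appears at least twice in the tail of the support
      have hdup : ∃ x, 2 ≤ List.count x w.support.tail := by
        rw [List.nodup_iff_count_le_one] at hnd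
        push_neg at hnd
        obtain ⟨x, hx⟩ := hnd
        exact ⟨x, hx⟩
      obtain ⟨x, hx2⟩ := hdup
      have hxt : x ∈ w.support.tail := by
        rw [← List.count_pos_iff]; omega
      have hxs : x ∈ w.support := List.mem_of_mem_tail hxt
      have key : ∀ (c : G.Walk x x), c.length ≤ n + 1 →
          2 ≤ List.count x c.support.tail → walkSign σ c = 1 := by
        intro c hlc hcc
        cases c with
        | nil => simp at hcc
        | cons hadj p' =>
          rename_i y
          rw [Walk.support_cons] at hcc
          simp only [List.tail_cons] at hcc
          have hxp : x ∈ p'.support := by rw [← List.count_pos_iff]; omega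
          have hspec := Walk.take_spec p' hxp
          have hct : List.count x (p'.takeUntil x hxp).support = 1 :=
            Walk.count_support_takeUntil_eq_one p' hxp
          have hsupp : p'.support
              = (p'.takeUntil x hxp).support ++ (p'.dropUntil x hxp).support.tail := by
            conv_lhs => rw [← hspec]
            exact Walk.support_append _ _
          have hcd : 1 ≤ List.count x (p'.dropUntil x hxp).support.tail := by
            rw [hsupp, List.count_append] at hcc
            omega
          have hdnenil : (p'.dropUntil x hxp).support.tail ≠ [] := by
            intro h
            rw [h] at hcd
            simp at hcd
          have hdlen : 1 ≤ (p'.dropUntil x hxp).length := by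
            have h1 : 0 < (p'.dropUntil x hxp).support.tail.length :=
              List.length_pos_iff.mpr hdnenil
            rw [List.length_tail, Walk.length_support] at h1
            omega
          have hplen : p'.length = (p'.takeUntil x hxp).length + (p'.dropUntil x hxp).length := by
            conv_lhs => rw [← hspec]
            exact Walk.length_append _ _
          have hlen1 : p'.length ≤ n := by
            simp only [Walk.length_cons] at hlc
            omega
          have hd1 : walkSign σ (p'.dropUntil x hxp) = 1 := by
            apply ih x
            omega
          have ht1 : walkSign σ (Walk.cons hadj (p'.takeUntil x hxp)) = 1 := by
            apply ih x
            simp only [Walk.length_cons]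
            omega
          calc walkSign σ (Walk.cons hadj p')
              = σ s(x, y) * walkSign σ p' := walkSign_cons _ _
            _ = σ s(x, y) * (walkSign σ (p'.takeUntil x hxp)
                  * walkSign σ (p'.dropUntil x hxp)) := by
                conv_lhs => rw [← hspec]
                rw [walkSign_append]
            _ = 1 := by
                rw [hd1, mul_one, ← walkSign_cons hadj]
                exact ht1
      have hsign : walkSign σ (w.rotate x hxs) = walkSign σ w := walkSign_rotate w hxs
      have hlenrot : (w.rotate x hxs).length = w.length := by
        have := ((Walk.rotate_edges w x hxs).perm).length_eq
        rw [← Walk.length_edges, ← Walk.length_edges, this]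
      have hcount : 2 ≤ List.count x (w.rotate x hxs).support.tail := by
        rw [((Walk.support_rotate w x hxs).perm).count_eq]
        exact hx2
      rw [← hsign]
      exact key _ (by omega) hcount

lemma walkSign_closed {G : SimpleGraph V} {σ : Sym2 V → ℤˣ} (hb : IsBalanced G σ)
    {v : V} (w : G.Walk v v) : walkSign σ w = 1 :=
  closedWalkSign hb w.length v w le_rfl

lemma walkSign_eq_of_balanced {G : SimpleGraph V} {σ : Sym2 V → ℤˣ} (hb : IsBalanced G σ)
    {u v : V} (p q : G.Walk u v) : walkSign σ p = walkSign σ q := by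
  have h := walkSign_closed hb (p.append q.reverse)
  rw [walkSign_append, walkSign_reverse] at h
  calc walkSign σ p = walkSign σ p * (walkSign σ q * walkSign σ q) := by
        rw [Int.units_mul_self, mul_one]
    _ = (walkSign σ p * walkSign σ q) * walkSign σ q := by rw [mul_assoc]
    _ = walkSign σ q := by rw [h, one_mul]

/-- The multiplier on `Sym2 V` induced by a switching function `θ`. -/
def mSign (θ : V → ℤˣ) : Sym2 V → ℤˣ :=
  Sym2.lift ⟨fun a b => θ a * θ b, fun a b => mul_comm _ _⟩

@[simp] lemma mSign_mk (θ : V → ℤˣ) (a b : V) : mSign θ s(a, b) = θ a * θ b :=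
  Sym2.lift_mk _ _ _

lemma walkSign_mul_mSign {θ : V → ℤˣ} {σ : Sym2 V → ℤˣ} {G : SimpleGraph V} :
    ∀ {u v : V} (w : G.Walk u v),
      walkSign (fun e => σ e * mSign θ e) w = θ u * θ v * walkSign σ w := by
  intro u v w
  induction w with
  | nil => simp [Int.units_mul_self]
  | cons h p ih =>
    rename_i a b c
    rw [walkSign_cons, walkSign_cons, ih, mSign_mk]
    have hb := Int.units_mul_self (θ b)
    calc σ s(a, b) * (θ a * θ b) * (θ b * θ c * walkSign σ p)
        = θ a * θ c * ((θ b * θ b) * (σ s(a, b) * walkSign σ p)) := by ac_rfl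
      _ = θ a * θ c * (σ s(a, b) * walkSign σ p) := by rw [hb, one_mul]

/-- The set of negative edges of `G` under `τ`. -/
noncomputable def negEdges [Fintype V] (G : SimpleGraph V) [DecidableRel G.Adj]
    (τ : Sym2 V → ℤˣ) : Finset (Sym2 V) :=
  G.edgeFinset.filter (fun e => τ e = -1)

lemma card_le_of_neg_struct [Fintype V] {G : SimpleGraph V} [DecidableRel G.Adj]
    {τ : Sym2 V → ℤˣ} {X : Finset V}
    (hinv : ∀ e ∈ negEdges G τ, ∃ x, x ∈ X ∧ x ∈ e)
    (hone : ∀ x ∈ X, ((negEdges G τ).filter (fun e => x ∈ e)).card ≤ 1) :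
    (negEdges G τ).card ≤ X.card := by
  apply Finset.card_le_card_of_injOn
    (fun e => if h : ∃ x, x ∈ X ∧ x ∈ e then h.choose else (Quot.out e).1)
  · intro e he
    beta_reduce
    rw [dif_pos (hinv e he)]
    exact (hinv e he).choose_spec.1
  · intro e1 h1 e2 h2 heq
    rw [Finset.mem_coe] at h1 h2
    simp only at heq
    rw [dif_pos (hinv e1 h1), dif_pos (hinv e2 h2)] at heq
    set x := (hinv e1 h1).choose with hxdef
    have hx1 : x ∈ X ∧ x ∈ e1 := (hinv e1 h1).choose_spec
    have hx2 : x ∈ e2 := by rw [heq]; exact (hinv e2 h2).choose_spec.2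
    exact Finset.card_le_one.mp (hone x hx1.1)
      e1 (Finset.mem_filter.mpr ⟨h1, hx1.2⟩) e2 (Finset.mem_filter.mpr ⟨h2, hx2⟩)

lemma exists_good_switch [Fintype V] (G : SimpleGraph V) [DecidableRel G.Adj]
    (hdeg : ∀ v : V, G.degree v ≤ 3) (X : Finset V) :
    ∀ (k : ℕ) (τ : Sym2 V → ℤˣ), (negEdges G τ).card ≤ k →
      (∀ e ∈ negEdges G τ, ∃ x, x ∈ X ∧ x ∈ e) →
      ∃ θ : V → ℤˣ, (negEdges G (fun e => τ e * mSign θ e)).card ≤ X.card := by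
  intro k
  induction k with
  | zero =>
    intro τ hk hinv
    refine ⟨fun _ => 1, ?_⟩
    have : (fun e => τ e * mSign (fun (_ : V) => (1:ℤˣ)) e) = τ := by
      funext e
      induction e using Sym2.ind with
      | _ a b => simp
    rw [this]
    omega
  | succ k ih =>
    intro τ hk hinv
    by_cases hterm : ∀ x ∈ X, ((negEdges G τ).filter (fun e => x ∈ e)).card ≤ 1
    · refine ⟨fun _ => 1, ?_⟩
      have : (fun e => τ e * mSign (fun (_ : V) => (1:ℤˣ)) e) = τ := by
        funext e
        induction e using Sym2.ind with
        | _ a b => simp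
      rw [this]
      exact card_le_of_neg_struct hinv hterm
    · push_neg at hterm
      obtain ⟨v, hvX, hv2⟩ := hterm
      set θv : V → ℤˣ := fun a => if a = v then -1 else 1 with hθv
      set τ' : Sym2 V → ℤˣ := fun e => τ e * mSign θv e with hτ'
      have hm_out : ∀ e : Sym2 V, v ∉ e → mSign θv e = 1 := by
        intro e hve
        induction e using Sym2.ind with
        | _ a b =>
          rw [Sym2.mem_iff] at hve
          push_neg at hve
          simp [hθv, Ne.symm hve.1, Ne.symm hve.2]
      have hm_in : ∀ e ∈ G.edgeFinset, v ∈ e → mSign θv e = -1 := by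
        intro e
        induction e using Sym2.ind with
        | _ a b =>
          intro he hve
          have hadj : G.Adj a b := (G.mem_edgeSet).mp (mem_edgeFinset.mp he)
          have hne : a ≠ b := hadj.ne
          rw [Sym2.mem_iff] at hve
          rcases hve with rfl | rfl
          · simp [hθv, Ne.symm hne]
          · simp [hθv, hne]
      -- edges not at v keep their sign
      have h_out : (negEdges G τ').filter (fun e => v ∉ e)
          = (negEdges G τ).filter (fun e => v ∉ e) := by
        ext e
        simp only [Finset.mem_filter, negEdges]
        constructor
        · rintro ⟨⟨he, hs⟩, hv⟩
          rw [hτ'] at hs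
          simp only at hs
          rw [hm_out e hv, mul_one] at hs
          exact ⟨⟨he, hs⟩, hv⟩
        · rintro ⟨⟨he, hs⟩, hv⟩
          refine ⟨⟨he, ?_⟩, hv⟩
          rw [hτ']
          simp only
          rw [hm_out e hv, mul_one]
          exact hs
      have h_in : (negEdges G τ').filter (fun e => v ∈ e)
          ⊆ G.incidenceFinset v \ ((negEdges G τ).filter (fun e => v ∈ e)) := by
        intro e he
        rw [Finset.mem_filter] at he
        obtain ⟨hneg, hve⟩ := he
        rw [negEdges, Finset.mem_filter] at hneg
        obtain ⟨hef, hs⟩ := hneg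
        rw [Finset.mem_sdiff]
        constructor
        · rw [mem_incidenceFinset]
          exact ⟨mem_edgeFinset.mp hef, hve⟩
        · rw [Finset.mem_filter, negEdges, Finset.mem_filter]
          rintro ⟨⟨-, hτneg⟩, -⟩
          rw [hτ'] at hs
          simp only at hs
          rw [hm_in e hef hve, hτneg] at hs
          norm_num at hs
      have hsub : (negEdges G τ).filter (fun e => v ∈ e) ⊆ G.incidenceFinset v := by
        intro e he
        rw [Finset.mem_filter, negEdges, Finset.mem_filter] at he
        rw [mem_incidenceFinset]
        exact ⟨mem_edgeFinset.mp he.1.1, he.2⟩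
      have hdegv : (G.incidenceFinset v).card ≤ 3 := by
        rw [card_incidenceFinset_eq_degree]
        exact hdeg v
      have hcard_in : ((negEdges G τ').filter (fun e => v ∈ e)).card ≤ 1 := by
        calc ((negEdges G τ').filter (fun e => v ∈ e)).card
            ≤ (G.incidenceFinset v \ ((negEdges G τ).filter (fun e => v ∈ e))).card :=
              Finset.card_le_card h_in
          _ = (G.incidenceFinset v).card - ((negEdges G τ).filter (fun e => v ∈ e)).card :=
              Finset.card_sdiff_of_subset hsub
          _ ≤ 1 := by omega
      have hsplit' : ((negEdges G τ').filter (fun e => v ∈ e)).card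
          + ((negEdges G τ').filter (fun e => v ∉ e)).card = (negEdges G τ').card :=
        Finset.card_filter_add_card_filter_not _
      have hsplit : ((negEdges G τ).filter (fun e => v ∈ e)).card
          + ((negEdges G τ).filter (fun e => v ∉ e)).card = (negEdges G τ).card :=
        Finset.card_filter_add_card_filter_not _
      have hlt : (negEdges G τ').card ≤ k := by
        rw [← hsplit']
        rw [h_out]
        omega
      have hinv' : ∀ e ∈ negEdges G τ', ∃ x, x ∈ X ∧ x ∈ e := by
        intro e he
        by_cases hve : v ∈ e
        · exact ⟨v, hvX, hve⟩
        · rw [negEdges, Finset.mem_filter] at he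
          apply hinv
          rw [negEdges, Finset.mem_filter]
          refine ⟨he.1, ?_⟩
          have := he.2
          rw [hτ'] at this
          simp only at this
          rwa [hm_out e hve, mul_one] at this
      obtain ⟨θ', hθ'⟩ := ih τ' hlt hinv'
      refine ⟨fun a => θv a * θ' a, ?_⟩
      have heq : (fun e => τ e * mSign (fun a => θv a * θ' a) e)
          = (fun e => τ' e * mSign θ' e) := by
        funext e
        induction e using Sym2.ind with
        | _ a b =>
          rw [hτ']
          simp only [mSign_mk]
          ac_rfl
      rw [heq]
      exact hθ'


/-- Zaslavsky's conjecture: for every signed subcubic graph, the frustration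
number equals the frustration index. -/
theorem frustrationNumber_eq_frustrationIndex_of_subcubic {V : Type*} [Fintype V]
    (G : SimpleGraph V) [DecidableRel G.Adj] (σ : Sym2 V → ℤˣ)
    (hdeg : ∀ v : V, G.degree v ≤ 3) :
    frustrationNumber G σ = frustrationIndex G σ := by
  classical
  apply le_antisymm
  · -- frustrationNumber ≤ frustrationIndex
    have hbal_all : IsBalanced (G.deleteEdges ↑G.edgeFinset) σ := by
      intro v w hc
      cases w with
      | nil => exact absurd rfl hc.ne_nil
      | cons hadj p =>
        rw [deleteEdges_adj] at hadj
        exact absurd (Finset.mem_coe.mpr (mem_edgeFinset.mpr hadj.1)) hadj.2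
    have hne : {n | ∃ s : Finset (Sym2 V), s.card = n ∧
        IsBalanced (G.deleteEdges ↑s) σ}.Nonempty :=
      ⟨G.edgeFinset.card, G.edgeFinset, rfl, hbal_all⟩
    obtain ⟨s, hscard, hsbal⟩ := Nat.sInf_mem hne
    set X : Finset V := s.image (fun e => (Quot.out e).1) with hXdef
    have hXcard : X.card ≤ s.card := Finset.card_image_le
    have hmapadj : ∀ a b : ↥((↑X : Set V)ᶜ),
        (G.induce ((↑X : Set V)ᶜ)).Adj a b → (G.deleteEdges ↑s).Adj a.val b.val := by
      intro a b hab
      rw [deleteEdges_adj]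
      refine ⟨hab, ?_⟩
      intro hmem
      rw [Finset.mem_coe] at hmem
      have hout : (Quot.out (s(a.val, b.val))).1 ∈ X :=
        Finset.mem_image_of_mem _ hmem
      have hin : (Quot.out (s(a.val, b.val))).1 ∈ s(a.val, b.val) := Sym2.out_fst_mem _
      rw [Sym2.mem_iff] at hin
      rcases hin with h | h
      · rw [h] at hout
        exact a.2 (Finset.mem_coe.mpr hout)
      · rw [h] at hout
        exact b.2 (Finset.mem_coe.mpr hout)
    have hbalX : IsBalanced (G.induce ((↑X : Set V)ᶜ)) (induceSign σ ((↑X : Set V)ᶜ)) := by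
      intro v w hc
      let f : G.induce ((↑X : Set V)ᶜ) →g G.deleteEdges ↑s :=
        ⟨Subtype.val, fun {a b} hab => hmapadj a b hab⟩
      have hinj : Function.Injective (f : ↥((↑X : Set V)ᶜ) → V) :=
        fun a b h => Subtype.val_injective h
      have hsign : walkSign σ (w.map f) = walkSign (induceSign σ ((↑X : Set V)ᶜ)) w := by
        unfold walkSign
        rw [Walk.edges_map, List.map_map]
        rfl
      rw [← hsign]
      exact hsbal v.val (w.map f) (hc.map hinj)
    calc frustrationNumber G σ ≤ X.card := Nat.sInf_le ⟨X, rfl, hbalX⟩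
      _ ≤ s.card := hXcard
      _ = frustrationIndex G σ := hscard
  · -- frustrationIndex ≤ frustrationNumber
    have hbal_univ : IsBalanced (G.induce ((↑(Finset.univ : Finset V) : Set V)ᶜ))
        (induceSign σ ((↑(Finset.univ : Finset V) : Set V)ᶜ)) := by
      intro v w _
      exact absurd (Finset.mem_coe.mpr (Finset.mem_univ v.val)) v.2
    have hne2 : {n | ∃ X : Finset V, X.card = n ∧
        IsBalanced (G.induce ((↑X : Set V)ᶜ)) (induceSign σ ((↑X : Set V)ᶜ))}.Nonempty :=
      ⟨(Finset.univ : Finset V).card, Finset.univ, rfl, hbal_univ⟩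
    obtain ⟨X, hXcard, hXbal⟩ := Nat.sInf_mem hne2
    set S : Set V := (↑X : Set V)ᶜ with hSdef
    set H : SimpleGraph ↥S := G.induce S with hHdef
    set σ' : Sym2 ↥S → ℤˣ := induceSign σ S with hσ'def
    have hbH : IsBalanced H σ' := hXbal
    have hreach : ∀ u : ↥S, H.Reachable (Quot.out (H.connectedComponentMk u)) u :=
      fun u => ConnectedComponent.exact ((H.connectedComponentMk u).out_eq)
    set f : ↥S → ℤˣ := fun u => walkSign σ' ((hreach u).some) with hfdef
    set θ₀ : V → ℤˣ := fun a => if h : a ∈ S then f ⟨a, h⟩ else 1 with hθ₀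
    have hkey : ∀ a b : V, G.Adj a b → ∀ (ha : a ∈ S) (hb : b ∈ S),
        σ s(a, b) * mSign θ₀ s(a, b) = 1 := by
      intro a b hadj ha hb
      have hadjH : H.Adj ⟨a, ha⟩ ⟨b, hb⟩ := hadj
      have hcomp : H.connectedComponentMk ⟨a, ha⟩ = H.connectedComponentMk ⟨b, hb⟩ :=
        ConnectedComponent.sound hadjH.reachable
      have hroot : Quot.out (H.connectedComponentMk ⟨b, hb⟩)
          = Quot.out (H.connectedComponentMk ⟨a, ha⟩) := by rw [hcomp]
      have hsignb : f ⟨b, hb⟩ = f ⟨a, ha⟩ * σ' s(⟨a, ha⟩, ⟨b, hb⟩) := by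
        have h1 : walkSign σ' (((hreach ⟨b, hb⟩).some).copy hroot rfl)
            = walkSign σ' (((hreach ⟨a, ha⟩).some).concat hadjH) :=
          walkSign_eq_of_balanced hbH _ _
        rw [walkSign_copy, walkSign_concat] at h1
        exact h1
      have hσ'ab : σ' s(⟨a, ha⟩, ⟨b, hb⟩) = σ s(a, b) := by
        rw [hσ'def]
        unfold induceSign
        rw [Sym2.map_pair_eq]
      have hθa : θ₀ a = f ⟨a, ha⟩ := by rw [hθ₀]; simp [ha]
      have hθb : θ₀ b = f ⟨b, hb⟩ := by rw [hθ₀]; simp [hb]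
      rw [mSign_mk, hθa, hθb, hsignb, hσ'ab, zu_cancel]
      exact Int.units_mul_self _
    set τ₀ : Sym2 V → ℤˣ := fun e => σ e * mSign θ₀ e with hτ₀
    have hinv : ∀ e ∈ negEdges G τ₀, ∃ x, x ∈ X ∧ x ∈ e := by
      intro e
      induction e using Sym2.ind with
      | _ a b =>
        intro he
        by_contra hno
        push_neg at hno
        have ha : a ∈ S := by
          rw [hSdef, Set.mem_compl_iff]
          intro h
          exact hno a (Finset.mem_coe.mp h) (Sym2.mem_mk_left a b)
        have hb : b ∈ S := by
          rw [hSdef, Set.mem_compl_iff]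
          intro h
          exact hno b (Finset.mem_coe.mp h) (Sym2.mem_mk_right a b)
        rw [negEdges, Finset.mem_filter] at he
        have hadj : G.Adj a b := (G.mem_edgeSet).mp (mem_edgeFinset.mp he.1)
        have h1 := hkey a b hadj ha hb
        have h2 := he.2
        rw [hτ₀] at h2
        simp only at h2
        rw [h1] at h2
        norm_num at h2
    obtain ⟨θ, hθ⟩ := exists_good_switch G hdeg X (negEdges G τ₀).card τ₀ le_rfl hinv
    set θt : V → ℤˣ := fun a => θ₀ a * θ a with hθt
    have heqf : (fun e => τ₀ e * mSign θ e) = (fun e => σ e * mSign θt e) := by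
      funext e
      induction e using Sym2.ind with
      | _ a b =>
        rw [hτ₀]
        simp only [mSign_mk, hθt]
        ac_rfl
    rw [heqf] at hθ
    set F := negEdges G (fun e => σ e * mSign θt e) with hFdef
    have hbalF : IsBalanced (G.deleteEdges ↑F) σ := by
      intro v w hc
      have h1 : walkSign (fun e => σ e * mSign θt e) w = walkSign σ w := by
        rw [walkSign_mul_mSign, Int.units_mul_self, one_mul]
      have h2 : walkSign (fun e => σ e * mSign θt e) w = 1 := by
        apply List.prod_eq_one
        intro x hx
        rw [List.mem_map] at hx
        obtain ⟨e, he, rfl⟩ := hx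
        have hee : e ∈ (G.deleteEdges (↑F : Set (Sym2 V))).edgeSet :=
          Walk.edges_subset_edgeSet w he
        rw [edgeSet_deleteEdges] at hee
        have hE : e ∈ G.edgeFinset := mem_edgeFinset.mpr hee.1
        have hnF : e ∉ F := fun h => hee.2 (Finset.mem_coe.mpr h)
        rcases Int.units_eq_one_or ((fun e => σ e * mSign θt e) e) with h | h
        · exact h
        · exact absurd (Finset.mem_filter.mpr ⟨hE, h⟩) hnF
      rw [← h1]
      exact h2
    calc frustrationIndex G σ ≤ F.card := Nat.sInf_le ⟨F, rfl, hbalF⟩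
      _ ≤ X.card := hθ
      _ = frustrationNumber G σ := hXcard
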